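/- arXiv:1401.7388 — 7 statements merged into one kernel-verified Lean document; each statement's English description precedes it below -/
import Mathlib

section
/- A maximum class C ⊆ {0,1}^n of VC dimension d has a unique representation as a d-complete collection: for each d-element set S ⊆ {1,...,n} there is exactly one d-dimensional subcube of C with free directions S. -/
open Finset

/-- A concept class `C` shatters a coordinate set `I` if every assignment of
values to the coordinates in `I` is realized by some concept in `C`. -/
def Shatters {α : Type*} (C : Finset (α → Bool)) (I : Finset α) : Prop :=
  ∀ f : α → Bool, ∃ c ∈ C, ∀ i ∈ I, c i = f i

/-- The VC dimension of a concept class: the largest cardinality of a shattered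
coordinate set. -/
noncomputable def vcDim {α : Type*} [Fintype α] [DecidableEq α]
    (C : Finset (α → Bool)) : ℕ :=
  letI := Classical.decPred (Shatters C)
  (Finset.univ.filter (Shatters C)).sup Finset.card

/-- The subcube with free coordinate set `S` and anchor `a`: all vectors that
agree with `a` outside `S`.  Its dimension is `S.card`. -/
def subcube {α : Type*} [Fintype α] [DecidableEq α] (S : Finset α) (a : α → Bool) :
    Finset (α → Bool) :=
  Finset.univ.filter fun c => ∀ i ∉ S, c i = a i

lemma shatters_le_vcDim {n : ℕ} (C : Finset (Fin n → Bool)) (I : Finset (Fin n))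
    (h : Shatters C I) : I.card ≤ _root_.vcDim C := by
  classical
  unfold _root_.vcDim
  exact Finset.le_sup (by simpa using h)

lemma anchor_unique {n d : ℕ} (C : Finset (Fin n → Bool)) (hvc : _root_.vcDim C = d)
    (S : Finset (Fin n)) (hS : S.card = d) (a b : Fin n → Bool)
    (ha0 : ∀ i ∈ S, a i = false) (hb0 : ∀ i ∈ S, b i = false)
    (ha : subcube S a ⊆ C) (hb : subcube S b ⊆ C) : a = b := by
  by_contra hne
  obtain ⟨j, hj⟩ : ∃ j, a j ≠ b j := by
    by_contra h; push_neg at h; exact hne (funext h)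
  have hjS : j ∉ S := fun hjs => hj ((ha0 j hjs).trans (hb0 j hjs).symm)
  have hsh : Shatters C (insert j S) := by
    intro g
    have : a j = g j ∨ b j = g j := by
      cases h1 : a j <;> cases h2 : g j <;> simp_all
    rcases this with hw | hw
    · refine ⟨fun k => if k ∈ S then g k else a k, ha ?_, ?_⟩
      · simp only [subcube, Finset.mem_filter, Finset.mem_univ, true_and]
        intro i hi; simp [hi]
      · intro i hi
        rcases Finset.mem_insert.1 hi with rfl | hi
        · simp [hjS, hw]
        · simp [hi]
    · refine ⟨fun k => if k ∈ S then g k else b k, hb ?_, ?_⟩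
      · simp only [subcube, Finset.mem_filter, Finset.mem_univ, true_and]
        intro i hi; simp [hi]
      · intro i hi
        rcases Finset.mem_insert.1 hi with rfl | hi
        · simp [hjS, hw]
        · simp [hi]
  have hle := shatters_le_vcDim C _ hsh
  rw [Finset.card_insert_of_notMem hjS, hS, hvc] at hle
  omega

/-- A maximum class of VC dimension `d` that is a union of a `d`-complete
collection has a unique representation as such: for each `d`-element direction
set `S` there is exactly one `d`-subcube of `C` with free directions `S`
(anchors normalized to `false` on `S`). -/
theorem maximum_unique_complete_collection (n d : ℕ)
    (C : Finset (Fin n → Bool))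
    (hcard : C.card = ∑ i ∈ Finset.range (d + 1), n.choose i)
    (hvc : vcDim C = d)
    (hcomplete : ∃ f : Finset (Fin n) → (Fin n → Bool),
      C = (Finset.univ.filter (fun S : Finset (Fin n) => S.card = d)).biUnion
            (fun S => subcube S (f S))) :
    ∀ S : Finset (Fin n), S.card = d →
      ∃! a : Fin n → Bool, (∀ i ∈ S, a i = false) ∧ subcube S a ⊆ C := by
  obtain ⟨f, hf⟩ := hcomplete
  intro S hS
  set a : Fin n → Bool := fun i => if i ∈ S then false else f S i with ha_def
  have ha0 : ∀ i ∈ S, a i = false := fun i hi => by simp [ha_def, hi]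
  have hasub : subcube S a ⊆ C := by
    intro c hc
    rw [hf]
    refine Finset.mem_biUnion.2 ⟨S, by simp [hS], ?_⟩
    simp only [subcube, Finset.mem_filter, Finset.mem_univ, true_and] at hc ⊢
    intro i hi
    simpa [ha_def, hi] using hc i hi
  exact ⟨a, ⟨ha0, hasub⟩, fun b ⟨hb0, hbsub⟩ =>
    anchor_unique C hvc S hS b a hb0 ha0 hbsub hasub⟩
end

section
/- Let C ⊆ {0,1}^n be a union of a d-complete collection of d-cubes. For any (d−1)-element set S of coordinate directions, the iterated reduction graph C^S is a forest (contains no cycles). -/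
open Finset

/-- The iterated reduction of a `d`-complete collection along a `(d-1)`-set `S`
of directions: the graph on the projected cube `{0,1}^{[n]\S}` whose edges are
the projections of the `d`-cubes of the collection whose direction set contains
`S`.  `f T` is the anchor of the cube of the collection with direction set `T`. -/
noncomputable def iteratedReduction (n : ℕ) (f : Finset (Fin n) → (Fin n → Bool))
    (S : Finset (Fin n)) : SimpleGraph ({i : Fin n // i ∉ S} → Bool) :=
  SimpleGraph.fromRel (fun u v =>
    ∃ x, x ∉ S ∧
      (∃ c ∈ subcube (insert x S) (f (insert x S)),
        ∀ i : {i : Fin n // i ∉ S}, c i.1 = u i) ∧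
      (∃ c ∈ subcube (insert x S) (f (insert x S)),
        ∀ i : {i : Fin n // i ∉ S}, c i.1 = v i))

/-!
An edge of `C^S` in direction `x` is the projection of the one cube of `C` with direction set
`S ∪ {x}`, so it is the only edge of `C^S` along which the `x`-coordinate changes. After deleting
it, the `x`-coordinate is constant along walks, so its endpoints are disconnected: every edge is a
bridge.
-/

namespace SimpleGraph

variable {V β : Type*} {G : SimpleGraph V}

lemma Reachable.apply_eq_of_forall_adj {φ : V → β} (hφ : ∀ a b, G.Adj a b → φ a = φ b)
    {u v : V} (h : G.Reachable u v) : φ u = φ v := by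
  have := (reachable_iff_reflTransGen u v).mp h |>.lift φ hφ
  rwa [Relation.reflTransGen_eq_self] at this

theorem isAcyclic_of_forall_adj_exists_separating
    (h : ∀ u v, G.Adj u v → ∃ φ : V → β, φ u ≠ φ v ∧
      ∀ a b, G.Adj a b → φ a ≠ φ b → s(a, b) = s(u, v)) :
    G.IsAcyclic := by
  refine isAcyclic_iff_forall_adj_isBridge.mpr fun u v huv => ?_
  obtain ⟨φ, hφuv, hφ⟩ := h u v huv
  refine isBridge_iff.mpr fun hreach => hφuv (hreach.apply_eq_of_forall_adj fun a b hab => ?_)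
  rw [deleteEdges_adj] at hab
  by_contra hne
  exact hab.2 (hφ a b hab.1 hne)

end SimpleGraph

section Hypercube

variable {ι : Type*} [DecidableEq ι]

lemma sym2_eq_update_of_forall_ne {u v g : ι → Bool} {x : ι} (huv : u ≠ v)
    (hg : ∀ i ≠ x, u i = g i ∧ v i = g i) :
    s(u, v) = s(Function.update g x false, Function.update g x true) := by
  have hu : u = Function.update g x (u x) := Function.eq_update_iff.mpr ⟨rfl, fun i hi => (hg i hi).1⟩
  have hv : v = Function.update g x (v x) := Function.eq_update_iff.mpr ⟨rfl, fun i hi => (hg i hi).2⟩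
  rw [hu, hv] at huv ⊢
  revert huv; cases u x <;> cases v x <;> simp [Sym2.eq_swap]

theorem isAcyclic_of_adj_sym2_eq_update (G : SimpleGraph (ι → Bool)) (g : ι → ι → Bool)
    (h : ∀ u v, G.Adj u v → ∃ x,
      s(u, v) = s(Function.update (g x) x false, Function.update (g x) x true)) :
    G.IsAcyclic := by
  refine G.isAcyclic_of_forall_adj_exists_separating (β := Bool) fun u v huv => ?_
  obtain ⟨x, hx⟩ := h u v huv
  refine ⟨fun w => w x, ?_, fun a b hab hne => ?_⟩
  · rw [Sym2.eq_iff] at hx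
    rcases hx with ⟨rfl, rfl⟩ | ⟨rfl, rfl⟩ <;> simp
  · obtain ⟨y, hy⟩ := h a b hab
    obtain rfl : y = x := by
      by_contra hyx
      rw [Sym2.eq_iff] at hy
      rcases hy with ⟨rfl, rfl⟩ | ⟨rfl, rfl⟩ <;> simp [Ne.symm hyx] at hne
    rw [hx, hy]

end Hypercube

lemma apply_eq_of_exists_mem_subcube_insert {n : ℕ} {S : Finset (Fin n)} {x : Fin n}
    {a : Fin n → Bool} {u : {i : Fin n // i ∉ S} → Bool}
    (h : ∃ c ∈ subcube (insert x S) a, ∀ i : {i : Fin n // i ∉ S}, c i.1 = u i)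
    (i : {i : Fin n // i ∉ S}) (hi : i.1 ≠ x) : u i = a i.1 := by
  obtain ⟨c, hc, hcu⟩ := h
  simp only [subcube, mem_filter, mem_univ, true_and] at hc
  rw [← hcu i, hc i.1 (by simp [hi, i.2])]

lemma iteratedReduction_adj {n : ℕ} {f : Finset (Fin n) → (Fin n → Bool)} {S : Finset (Fin n)}
    {u v : {i : Fin n // i ∉ S} → Bool} (h : (iteratedReduction n f S).Adj u v) :
    ∃ x : {i : Fin n // i ∉ S}, s(u, v) =
      s(Function.update (fun i => f (insert x.1 S) i.1) x false,
        Function.update (fun i => f (insert x.1 S) i.1) x true) := by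
  obtain ⟨huv, h⟩ := h
  obtain ⟨x, hx, hu, hv⟩ : ∃ x ∉ S,
      (∃ c ∈ subcube (insert x S) (f (insert x S)), ∀ i : {i : Fin n // i ∉ S}, c i.1 = u i) ∧
      (∃ c ∈ subcube (insert x S) (f (insert x S)), ∀ i : {i : Fin n // i ∉ S}, c i.1 = v i) := by
    rcases h with ⟨x, hx, hu, hv⟩ | ⟨x, hx, hv, hu⟩ <;> exact ⟨x, hx, hu, hv⟩
  refine ⟨⟨x, hx⟩, sym2_eq_update_of_forall_ne huv fun i hi => ?_⟩
  have hi : i.1 ≠ x := fun h => hi (Subtype.ext h)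
  exact ⟨apply_eq_of_exists_mem_subcube_insert hu i hi,
    apply_eq_of_exists_mem_subcube_insert hv i hi⟩

theorem iteratedReduction_isAcyclic_general (n : ℕ)
    (f : Finset (Fin n) → (Fin n → Bool))
    (S : Finset (Fin n)) :
    (iteratedReduction n f S).IsAcyclic :=
  isAcyclic_of_adj_sym2_eq_update _ _ fun _ _ => iteratedReduction_adj

/-- For a class which is a complete union of `d`-cubes, every `(d-1)`-iterated
reduction is a forest. -/
theorem iteratedReduction_isAcyclic (n d : ℕ) (hd : 1 ≤ d)
    (f : Finset (Fin n) → (Fin n → Bool))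
    (S : Finset (Fin n)) (hS : S.card = d - 1) :
    (iteratedReduction n f S).IsAcyclic :=
  iteratedReduction_isAcyclic_general n f S
end

section
/- Suppose C ⊆ {0,1}^n is a concept class of VC dimension d which is not maximum. Then there exists a coordinate direction x such that the projection p obtained by deleting coordinate x satisfies: p(C) has VC dimension d and the deficiency of p(C) is strictly less than the deficiency of C. -/
open Finset

/-- Projection of the `n`-cube deleting coordinate `x`. -/
def projAway {n : ℕ} (x : Fin n) (c : Fin n → Bool) : {i : Fin n // i ≠ x} → Bool :=
  fun i => c i.1

set_option linter.unusedSectionVars false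

section Basic
variable {α : Type*} [Fintype α] [DecidableEq α] {C D : Finset (α → Bool)} {I J : Finset α}

lemma shatters_mono (h : D ⊆ C) (hD : Shatters D I) : Shatters C I := by
  intro f; obtain ⟨c, hc, hcf⟩ := hD f; exact ⟨c, h hc, hcf⟩

lemma shatters_card_le (h : Shatters C I) : I.card ≤ vcDim C := by
  classical
  unfold _root_.vcDim
  exact Finset.le_sup (by simp [h])

lemma vcDim_le {k : ℕ} (h : ∀ I, Shatters C I → I.card ≤ k) : vcDim C ≤ k := by
  classical
  unfold _root_.vcDim
  exact Finset.sup_le fun I hI => h I (by simpa using hI)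

lemma shatters_empty' (h : C.Nonempty) : Shatters C ∅ := by
  intro f; obtain ⟨c, hc⟩ := h; exact ⟨c, hc, by simp⟩

lemma exists_shattered (h : C.Nonempty) : ∃ I, Shatters C I ∧ I.card = vcDim C := by
  classical
  have hne : (Finset.univ.filter (Shatters C)).Nonempty :=
    ⟨∅, by simp [shatters_empty' h]⟩
  obtain ⟨I, hI, hEq⟩ := Finset.exists_mem_eq_sup _ hne Finset.card
  refine ⟨I, by simpa using hI, ?_⟩
  unfold _root_.vcDim
  rw [hEq]

lemma shatters_avoid {x : α} (hall : ∀ c ∈ C, c x = false) (h : Shatters C J) : x ∉ J := by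
  intro hx
  obtain ⟨c, hc, hcf⟩ := h (fun _ => true)
  have := hcf x hx
  simp [hall c hc] at this

end Basic

section PjTl
variable {α : Type*} [Fintype α] [DecidableEq α] (x y : α) (C : Finset (α → Bool))

/-- projection at `x`: set every concept's `x`-coordinate to `false`. -/
def pj : Finset (α → Bool) := C.image (fun c => Function.update c x false)

/-- tail at `x`: concepts (normalized to `false` at `x`) both of whose extensions lie in `C`. -/
def tl : Finset (α → Bool) :=
  C.filter (fun c => c x = false ∧ Function.update c x true ∈ C)

variable {x y C}

lemma pj_false : ∀ c ∈ pj x C, c x = false := by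
  intro c hc
  obtain ⟨c', _, rfl⟩ := Finset.mem_image.1 hc
  simp

lemma tl_subset : tl x C ⊆ C := Finset.filter_subset _ _

lemma tl_false : ∀ c ∈ tl x C, c x = false := by
  intro c hc
  exact ((Finset.mem_filter.1 hc).2).1

lemma mem_pj_of_mem {c : α → Bool} (hc : c ∈ C) : Function.update c x false ∈ pj x C :=
  Finset.mem_image_of_mem _ hc

lemma shatters_pj_of {I : Finset α} (h : Shatters C I) (hx : x ∉ I) :
    Shatters (pj x C) I := by
  intro f
  obtain ⟨c, hc, hcf⟩ := h f
  refine ⟨Function.update c x false, mem_pj_of_mem hc, ?_⟩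
  intro i hi
  rw [Function.update_of_ne (ne_of_mem_of_not_mem hi hx) _ _]
  exact hcf i hi

lemma shatters_of_pj {J : Finset α} (h : Shatters (pj x C) J) : Shatters C J := by
  have hxJ : x ∉ J := shatters_avoid pj_false h
  intro f
  obtain ⟨c', hc', hcf⟩ := h f
  obtain ⟨c, hc, rfl⟩ := Finset.mem_image.1 hc'
  refine ⟨c, hc, fun i hi => ?_⟩
  rw [← hcf i hi, Function.update_of_ne (ne_of_mem_of_not_mem hi hxJ)]

lemma vcDim_pj_le : vcDim (pj x C) ≤ vcDim C :=
  vcDim_le fun _ h => shatters_card_le (shatters_of_pj h)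

lemma shatters_tl {J : Finset α} (h : Shatters (tl x C) J) :
    Shatters C (insert x J) := by
  have hxJ : x ∉ J := shatters_avoid tl_false h
  intro f
  obtain ⟨c, hc, hcf⟩ := h f
  obtain ⟨hcC, hcx, hcu⟩ := Finset.mem_filter.1 hc
  cases hfx : f x with
  | false =>
    refine ⟨c, hcC, ?_⟩
    intro i hi
    rcases Finset.mem_insert.1 hi with rfl | hi
    · rw [hcx, hfx]
    · exact hcf i hi
  | true =>
    refine ⟨Function.update c x true, hcu, ?_⟩
    intro i hi
    rcases Finset.mem_insert.1 hi with rfl | hi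
    · simp [hfx]
    · rw [Function.update_of_ne (ne_of_mem_of_not_mem hi hxJ)]
      exact hcf i hi

lemma pj_comm (hxy : x ≠ y) : pj y (pj x C) = pj x (pj y C) := by
  unfold pj
  rw [Finset.image_image, Finset.image_image]
  congr 1
  funext c
  simp only [Function.comp]
  exact Function.update_comm hxy _ _ _

lemma pj_tl_subset (hxy : x ≠ y) : pj x (tl y C) ⊆ tl y (pj x C) := by
  intro c' hc'
  obtain ⟨c, hc, rfl⟩ := Finset.mem_image.1 hc'
  obtain ⟨hcC, hcy, hcu⟩ := Finset.mem_filter.1 hc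
  refine Finset.mem_filter.2 ⟨mem_pj_of_mem hcC, ?_, ?_⟩
  · rw [Function.update_of_ne (Ne.symm hxy)]; exact hcy
  · rw [Function.update_comm hxy]
    exact mem_pj_of_mem hcu

lemma card_pj_add_card_tl : (pj x C).card + (tl x C).card = C.card := by
  classical
  set C0 := C.filter (fun c => c x = false) with hC0
  set C1 := C.filter (fun c => c x = true) with hC1
  set D1 := C1.image (fun c => Function.update c x false) with hD1
  have hupd0 : ∀ c ∈ C0, Function.update c x false = c := by
    intro c hc
    have := (Finset.mem_filter.1 hc).2
    funext i
    by_cases hi : i = x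
    · subst hi; simp [this]
    · rw [Function.update_of_ne hi]
  have hpj : pj x C = C0 ∪ D1 := by
    unfold pj
    ext c
    simp only [Finset.mem_image, Finset.mem_union, hD1, hC0, hC1, Finset.mem_filter]
    constructor
    · rintro ⟨c', hc', rfl⟩
      cases hcx : c' x with
      | false =>
        left
        have : Function.update c' x false = c' := by
          funext i
          by_cases hi : i = x
          · subst hi; simp [hcx]
          · rw [Function.update_of_ne hi]
        rw [this]; exact ⟨hc', hcx⟩
      | true => exact Or.inr ⟨c', ⟨hc', hcx⟩, rfl⟩
    · rintro (⟨hc, hcx⟩ | ⟨c', ⟨hc', hcx⟩, rfl⟩)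
      · refine ⟨c, hc, ?_⟩
        funext i
        by_cases hi : i = x
        · subst hi; simp [hcx]
        · rw [Function.update_of_ne hi]
      · exact ⟨c', hc', rfl⟩
  have hinter : C0 ∩ D1 = tl x C := by
    ext c
    simp only [Finset.mem_inter, hD1, hC0, hC1, Finset.mem_image, Finset.mem_filter, tl]
    constructor
    · rintro ⟨⟨hc, hcx⟩, c', ⟨hc', hcx'⟩, rfl⟩
      refine ⟨hc, hcx, ?_⟩
      have : Function.update (Function.update c' x false) x true = c' := by
        funext i
        by_cases hi : i = x
        · subst hi; simp [hcx']
        · simp [Function.update_of_ne hi]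
      rw [this]; exact hc'
    · rintro ⟨hc, hcx, hcu⟩
      refine ⟨⟨hc, hcx⟩, Function.update c x true, ⟨hcu, by simp⟩, ?_⟩
      funext i
      by_cases hi : i = x
      · subst hi; simp [hcx]
      · simp [Function.update_of_ne hi]
  have hD1card : D1.card = C1.card := by
    rw [hD1]
    apply Finset.card_image_of_injOn
    intro c hc c' hc' h
    have hcx := (Finset.mem_filter.1 hc).2
    have hcx' := (Finset.mem_filter.1 hc').2
    funext i
    by_cases hi : i = x
    · subst hi; rw [hcx, hcx']
    · have := congrFun h i
      simp only [] at this
      rwa [Function.update_of_ne hi, Function.update_of_ne hi] at this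
  have hsplit : C0.card + C1.card = C.card := by
    rw [hC0, hC1]
    have : C.filter (fun c => c x = true) = C.filter (fun c => ¬ (c x = false)) := by
      apply Finset.filter_congr
      intro c _
      simp
    rw [this, Finset.card_filter_add_card_filter_not]
  have hu : (C0 ∪ D1).card + (C0 ∩ D1).card = C0.card + D1.card :=
    Finset.card_union_add_card_inter _ _
  rw [hpj, hinter] at *
  omega

end PjTl

section Sauer
variable {α : Type*} [Fintype α] [DecidableEq α]

/-- the indicator-set translation. -/
def bset (c : α → Bool) : Finset α := Finset.univ.filter (fun i => c i = true)

lemma bset_inj : Function.Injective (bset (α := α)) := by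
  intro c c' h
  funext i
  have : (i ∈ bset c) = (i ∈ bset c') := by rw [h]
  simp only [bset, Finset.mem_filter, Finset.mem_univ, true_and] at this
  cases hc : c i <;> cases hc' : c' i <;> simp [hc, hc'] at this ⊢

lemma shatters_of_finset_shatters {C : Finset (α → Bool)} {s : Finset α}
    (h : (C.image bset).Shatters s) : Shatters C s := by
  intro f
  obtain ⟨u, hu, hsu⟩ := h (Finset.filter_subset (fun i => f i = true) s)
  obtain ⟨c, hc, rfl⟩ := Finset.mem_image.1 hu
  refine ⟨c, hc, fun i hi => ?_⟩
  have hmem : (i ∈ s ∩ bset c) = (i ∈ s.filter (fun i => f i = true)) := by rw [hsu]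
  simp only [Finset.mem_inter, Finset.mem_filter, bset, Finset.mem_univ, true_and, hi,
    true_and] at hmem
  cases hci : c i <;> cases hfi : f i <;> simp [hci, hfi] at hmem ⊢

lemma sauer_count (C : Finset (α → Bool)) (A : Finset α) (k : ℕ)
    (h : ∀ J, Shatters C J → J ⊆ A ∧ J.card < k) :
    C.card ≤ ∑ i ∈ Finset.range k, A.card.choose i := by
  classical
  have h1 : C.card = (C.image bset).card :=
    (Finset.card_image_of_injective _ bset_inj).symm
  have h2 : (C.image bset).card ≤ (C.image bset).shatterer.card :=
    Finset.card_le_card_shatterer _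
  have h3 : (C.image bset).shatterer ⊆
      (Finset.range k).biUnion (fun i => Finset.powersetCard i A) := by
    intro s hs
    have hsh : Shatters C s := shatters_of_finset_shatters (Finset.mem_shatterer.1 hs)
    obtain ⟨hsub, hcard⟩ := h s hsh
    exact Finset.mem_biUnion.2 ⟨s.card, Finset.mem_range.2 hcard,
      Finset.mem_powersetCard.2 ⟨hsub, rfl⟩⟩
  calc C.card = (C.image bset).card := h1
    _ ≤ (C.image bset).shatterer.card := h2
    _ ≤ ((Finset.range k).biUnion (fun i => Finset.powersetCard i A)).card :=
        Finset.card_le_card h3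
    _ ≤ ∑ i ∈ Finset.range k, (Finset.powersetCard i A).card := Finset.card_biUnion_le
    _ = ∑ i ∈ Finset.range k, A.card.choose i := by
        apply Finset.sum_congr rfl
        intro i _
        rw [Finset.card_powersetCard]

end Sauer

lemma phi_succ (d k : ℕ) :
    ∑ i ∈ Finset.range (d+1), (k+1).choose i
      = ∑ i ∈ Finset.range (d+1), k.choose i + ∑ i ∈ Finset.range d, k.choose i := by
  induction d with
  | zero => simp
  | succ d ih =>
    have e1 := Finset.sum_range_succ (fun i => (k+1).choose i) (d+1)
    have e2 := Finset.sum_range_succ (fun i => k.choose i) (d+1)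
    have e3 := Finset.sum_range_succ (fun i => k.choose i) d
    have e4 : (k+1).choose (d+1) = k.choose d + k.choose (d+1) := Nat.choose_succ_succ k d
    rw [e1, ih, e2, e3, e4]
    ring

lemma phi_succ' (d k : ℕ) :
    ∑ i ∈ Finset.range d, (k+1).choose i
      = ∑ i ∈ Finset.range d, k.choose i + ∑ i ∈ Finset.range (d-1), k.choose i := by
  cases d with
  | zero => simp
  | succ e => simpa using phi_succ e k

lemma main_ind {α : Type*} [Fintype α] [DecidableEq α] :
    ∀ (k : ℕ) (S : Finset α) (C : Finset (α → Bool)), Sᶜ.card = k →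
      (∀ c ∈ C, ∀ i ∈ S, c i = false) → C.Nonempty →
      (∀ x, x ∉ S → vcDim (pj x C) = vcDim C →
        ∑ i ∈ Finset.range (vcDim C), (k-1).choose i ≤ (tl x C).card) →
      ∑ i ∈ Finset.range (vcDim C + 1), k.choose i ≤ C.card := by
  intro k
  induction k with
  | zero =>
    intro S C hk hdead hne _
    -- vcDim C = 0 here
    obtain ⟨I, hI, hId⟩ := exists_shattered hne
    have hIS : ∀ i ∈ S, i ∉ I := fun i hiS =>
      shatters_avoid (fun c hc => hdead c hc i hiS) hI
    have hIsub : I ⊆ Sᶜ := fun i hi => Finset.mem_compl.2 (fun hiS => hIS i hiS hi)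
    have hd0 : vcDim C = 0 := by
      rw [← hId]
      have := Finset.card_le_card hIsub
      omega
    rw [hd0]
    simpa using hne.card_pos
  | succ k ih =>
    intro S C hk hdead hne H
    simp only [Nat.add_sub_cancel] at H
    obtain ⟨I, hI, hId⟩ := exists_shattered hne
    have hIS : ∀ i ∈ S, i ∉ I := fun i hiS =>
      shatters_avoid (fun c hc => hdead c hc i hiS) hI
    have hIsub : I ⊆ Sᶜ := fun i hi => Finset.mem_compl.2 (fun hiS => hIS i hiS hi)
    have hdle : vcDim C ≤ k + 1 := by
      rw [← hId]; simpa [hk] using Finset.card_le_card hIsub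
    rcases eq_or_lt_of_le hdle with hdk | hdk
    · -- maximum-dimension case : C contains a full cube pattern, |C| ≥ 2^(k+1)
      rw [hdk, Nat.sum_range_choose]
      have hpow : I.powerset.card = 2 ^ (k+1) := by
        rw [Finset.card_powerset, hId, hdk]
      have H1 : ∀ t : Finset α, ∃ c ∈ C, ∀ i ∈ I, c i = decide (i ∈ t) := fun t =>
        hI (fun i => decide (i ∈ t))
      choose g hgC hgf using H1
      have hinj : Set.InjOn g I.powerset := by
        intro t ht t' ht' hgt
        have ht := Finset.mem_powerset.1 ht
        have ht' := Finset.mem_powerset.1 ht'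
        ext i
        constructor
        · intro hit
          have hiI : i ∈ I := ht hit
          have := (hgf t i hiI).symm.trans ((hgt ▸ rfl : g t i = g t' i).trans (hgf t' i hiI))
          simpa [hit] using this.symm
        · intro hit
          have hiI : i ∈ I := ht' hit
          have := (hgf t i hiI).symm.trans ((hgt ▸ rfl : g t i = g t' i).trans (hgf t' i hiI))
          simpa [hit] using this
      calc 2 ^ (k+1) = I.powerset.card := hpow.symm
        _ ≤ C.card := Finset.card_le_card_of_injOn g (fun t _ => hgC t) hinj
    · -- d < k+1 : pick a good coordinate x outside S ∪ I
      have hcard : I.card < Sᶜ.card := by rw [hk, hId]; omega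
      have hss : I ⊂ Sᶜ := Finset.ssubset_iff_subset_ne.2
        ⟨hIsub, fun h => by rw [h] at hcard; exact lt_irrefl _ hcard⟩
      obtain ⟨x, hxSc, hxI⟩ := Finset.exists_of_ssubset hss
      have hxS : x ∉ S := Finset.mem_compl.1 hxSc
      have hvc_pj : vcDim (pj x C) = vcDim C := by
        refine le_antisymm vcDim_pj_le ?_
        rw [← hId]
        exact shatters_card_le (shatters_pj_of hI hxI)
      have hHx := H x hxS hvc_pj
      -- apply the inductive hypothesis to the projection
      have hScard : (insert x S)ᶜ.card = k := by
        rw [Finset.card_compl] at hk ⊢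
        rw [Finset.card_insert_of_notMem hxS]
        omega
      have hdead' : ∀ c ∈ pj x C, ∀ i ∈ insert x S, c i = false := by
        intro c hc i hi
        obtain ⟨c', hc', rfl⟩ := Finset.mem_image.1 hc
        rcases Finset.mem_insert.1 hi with rfl | hiS
        · simp
        · have hix : i ≠ x := fun h => hxS (h ▸ hiS)
          rw [Function.update_of_ne hix]
          exact hdead c' hc' i hiS
      have hne' : (pj x C).Nonempty := hne.image _
      have hIH := ih (insert x S) (pj x C) hScard hdead' hne' ?_
      · rw [hvc_pj] at hIH
        have hcc := card_pj_add_card_tl (x := x) (C := C)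
        have hP := phi_succ (vcDim C) k
        omega
      · -- transfer the hypothesis to the projected class
        intro y hy hvy
        have hyx : y ≠ x := fun h => hy (h ▸ Finset.mem_insert_self x S)
        have hyS : y ∉ S := fun h => hy (Finset.mem_insert_of_mem h)
        rw [hvc_pj] at hvy ⊢
        rw [pj_comm hyx.symm] at hvy
        have hvyC : vcDim (pj y C) = vcDim C := by
          refine le_antisymm vcDim_pj_le ?_
          calc vcDim C = vcDim (pj x (pj y C)) := hvy.symm
            _ ≤ vcDim (pj y C) := vcDim_pj_le
        have hHy := H y hyS hvyC
        have c1 := card_pj_add_card_tl (x := x) (C := tl y C)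
        have c2 : (pj x (tl y C)).card ≤ (tl y (pj x C)).card :=
          Finset.card_le_card (pj_tl_subset hyx.symm)
        have c3 : (tl x (tl y C)).card
            ≤ ∑ i ∈ Finset.range (vcDim C - 1), (k-1).choose i := by
          have hA : ((insert x (insert y S))ᶜ).card = k - 1 := by
            rw [Finset.card_compl] at hk ⊢
            rw [Finset.card_insert_of_notMem, Finset.card_insert_of_notMem hyS]
            · omega
            · simp only [Finset.mem_insert]
              rintro (rfl | h)
              · exact hyx rfl
              · exact hxS h
          rw [← hA]
          apply sauer_count
          intro J hJ
          have hxJ : x ∉ J := shatters_avoid (tl_false) hJ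
          have hyJ : y ∉ J :=
            shatters_avoid (fun c hc => tl_false c (tl_subset hc)) hJ
          have hSJ : ∀ i ∈ S, i ∉ J := fun i hiS =>
            shatters_avoid (fun c hc => hdead c (tl_subset (tl_subset hc)) i hiS) hJ
          constructor
          · intro i hiJ
            simp only [Finset.mem_compl, Finset.mem_insert]
            rintro (rfl | rfl | h)
            · exact hxJ hiJ
            · exact hyJ hiJ
            · exact hSJ i h hiJ
          · have h2 : Shatters C (insert y (insert x J)) := shatters_tl (shatters_tl hJ)
            have hcard2 : (insert y (insert x J)).card = J.card + 2 := by
              rw [Finset.card_insert_of_notMem, Finset.card_insert_of_notMem hxJ]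
              simp only [Finset.mem_insert]
              rintro (rfl | h)
              · exact hyx rfl
              · exact hyJ h
            have := shatters_card_le h2
            omega
        have hky : 1 ≤ k := by
          have : y ∈ (insert x S)ᶜ := Finset.mem_compl.2 hy
          have := Finset.card_pos.2 ⟨y, this⟩
          omega
        have hP : ∑ i ∈ Finset.range (vcDim C), k.choose i
            = ∑ i ∈ Finset.range (vcDim C), (k-1).choose i
              + ∑ i ∈ Finset.range (vcDim C - 1), (k-1).choose i := by
          have := phi_succ' (vcDim C) (k-1)
          have hk1 : k - 1 + 1 = k := by omega
          rwa [hk1] at this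
        omega

section Bridge
variable {α : Type*} [Fintype α] [DecidableEq α] (x : α)

/-- projection to the subtype deleting `x` (general form of `projAway`). -/
def prj (c : α → Bool) : {i : α // i ≠ x} → Bool := fun i => c i.1

/-- extension back, filling `x` with `false`. -/
def ext' (g : {i : α // i ≠ x} → Bool) : α → Bool :=
  fun i => if h : i = x then false else g ⟨i, h⟩

variable {x}

lemma ext'_prj (c : α → Bool) : ext' x (prj x c) = Function.update c x false := by
  funext i
  by_cases h : i = x
  · subst h; simp [ext', Function.update]
  · simp [ext', prj, h, Function.update_of_ne h]

lemma ext'_inj : Function.Injective (ext' x) := by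
  intro g g' h
  funext i
  have := congrFun h i.1
  simpa [ext', i.2] using this

lemma prj_ext' (g : {i : α // i ≠ x} → Bool) : prj x (ext' x g) = g := by
  funext i
  simp [ext', prj, i.2]

lemma image_ext'_image_prj (C : Finset (α → Bool)) :
    (C.image (prj x)).image (ext' x) = pj x C := by
  rw [Finset.image_image]
  unfold pj
  apply Finset.image_congr
  intro c _
  exact ext'_prj c

lemma card_prj_eq_card_pj (C : Finset (α → Bool)) :
    (C.image (prj x)).card = (pj x C).card := by
  rw [← image_ext'_image_prj, Finset.card_image_of_injective _ ext'_inj]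

lemma vcDim_prj_eq_vcDim_pj (C : Finset (α → Bool)) :
    vcDim (C.image (prj x)) = vcDim (pj x C) := by
  apply le_antisymm
  · apply vcDim_le
    intro J hJ
    have hcard : (J.image (Subtype.val : {i : α // i ≠ x} → α)).card = J.card :=
      Finset.card_image_of_injective _ Subtype.val_injective
    rw [← hcard]
    apply shatters_card_le (C := pj x C)
    intro f
    obtain ⟨g, hg, hgf⟩ := hJ (fun i => f i.1)
    refine ⟨ext' x g, ?_, ?_⟩
    · rw [← image_ext'_image_prj]; exact Finset.mem_image_of_mem _ hg
    · intro i hi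
      obtain ⟨j, hj, rfl⟩ := Finset.mem_image.1 hi
      have : ext' x g j.1 = g j := by simp [ext', j.2]
      rw [this]
      exact hgf j hj
  · apply vcDim_le
    intro K hK
    have hxK : x ∉ K := shatters_avoid pj_false hK
    classical
    set K' : Finset {i : α // i ≠ x} :=
      K.attach.image (fun i => (⟨i.1, fun h => hxK (h ▸ i.2)⟩ : {i : α // i ≠ x})) with hK'
    have hcard : K'.card = K.card := by
      rw [hK', Finset.card_image_of_injOn, Finset.card_attach]
      intro a _ b _ h
      simp only [Subtype.mk.injEq] at h
      exact Subtype.ext h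
    rw [← hcard]
    apply shatters_card_le (C := C.image (prj x))
    intro f
    obtain ⟨c', hc', hcf⟩ := hK (ext' x f)
    rw [← image_ext'_image_prj] at hc'
    obtain ⟨g, hg, rfl⟩ := Finset.mem_image.1 hc'
    refine ⟨g, hg, ?_⟩
    intro j hj
    rw [hK', Finset.mem_image] at hj
    obtain ⟨i, _, rfl⟩ := hj
    have hnex : i.1 ≠ x := fun h => hxK (h ▸ i.2)
    have h2 := hcf i.1 i.2
    simpa [ext', hnex] using h2

end Bridge

lemma sum_choose_zero (d : ℕ) : ∑ i ∈ Finset.range (d + 1), Nat.choose 0 i = 1 := by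
  induction d with
  | zero => simp
  | succ d ih => rw [Finset.sum_range_succ, ih]; simp


/-- If a (nonempty) class `C` of VC dimension `d` is not maximum, then some
one-coordinate projection preserves the VC dimension and strictly decreases the
deficiency. -/
theorem exists_projection_decreasing_deficiency (n d : ℕ)
    (C : Finset (Fin n → Bool)) (hne : C.Nonempty)
    (hC : vcDim C = d)
    (hnotmax : C.card ≠ ∑ i ∈ Finset.range (d + 1), n.choose i) :
    ∃ x : Fin n,
      vcDim (C.image (projAway x)) = d ∧
      (∑ i ∈ Finset.range (d + 1), (n - 1).choose i) - (C.image (projAway x)).card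
        < (∑ i ∈ Finset.range (d + 1), n.choose i) - C.card := by
  classical
  subst hC
  have hproj : ∀ x : Fin n, C.image (projAway x) = C.image (prj x) := fun x => rfl
  have hSauerC : C.card ≤ ∑ i ∈ Finset.range (vcDim C + 1), n.choose i := by
    have := sauer_count C Finset.univ (vcDim C + 1) (fun J hJ =>
      ⟨Finset.subset_univ J, Nat.lt_succ_of_le (shatters_card_le hJ)⟩)
    simpa using this
  rcases Nat.eq_zero_or_pos n with hn | hn
  · exfalso
    subst hn
    have h1 : C.card ≤ 1 := by
      have := Finset.card_le_univ C
      simpa [Finset.card_univ] using this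
    have h2 : 1 ≤ C.card := hne.card_pos
    rw [sum_choose_zero] at hnotmax
    omega
  have hlt : C.card < ∑ i ∈ Finset.range (vcDim C + 1), n.choose i :=
    lt_of_le_of_ne hSauerC hnotmax
  by_contra hcon
  push_neg at hcon
  -- every coordinate with full-dimensional projection has a "maximum" tail
  have Hmain : ∀ x : Fin n, x ∉ (∅ : Finset (Fin n)) → vcDim (pj x C) = vcDim C →
      ∑ i ∈ Finset.range (vcDim C), (n - 1).choose i ≤ (tl x C).card := by
    intro x _ hv
    have hbr : vcDim (C.image (projAway x)) = vcDim C := by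
      rw [hproj x, vcDim_prj_eq_vcDim_pj, hv]
    have hcard : (C.image (projAway x)).card = (pj x C).card := by
      rw [hproj x]; exact card_prj_eq_card_pj C
    have hineq := hcon x hbr
    rw [hcard] at hineq
    have e1 : (pj x C).card + (tl x C).card = C.card := card_pj_add_card_tl
    have e2 : (pj x C).card ≤ ∑ i ∈ Finset.range (vcDim C + 1), (n-1).choose i := by
      have hA : ({x}ᶜ : Finset (Fin n)).card = n - 1 := by
        rw [Finset.card_compl, Finset.card_singleton, Fintype.card_fin]
      rw [← hA]
      apply sauer_count
      intro J hJ
      constructor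
      · intro i hi
        simp only [Finset.mem_compl, Finset.mem_singleton]
        rintro rfl
        exact shatters_avoid pj_false hJ hi
      · exact Nat.lt_succ_of_le (shatters_card_le (shatters_of_pj hJ))
    have e4 : ∑ i ∈ Finset.range (vcDim C + 1), n.choose i
        = ∑ i ∈ Finset.range (vcDim C + 1), (n-1).choose i
          + ∑ i ∈ Finset.range (vcDim C), (n-1).choose i := by
      have := phi_succ (vcDim C) (n-1)
      have hn1 : n - 1 + 1 = n := by omega
      rwa [hn1] at this
    omega
  have hfinal := main_ind n ∅ C (by simp [Finset.card_univ]) (by simp) hne ?_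
  · omega
  · simpa using Hmain
end

section
/- Fix even d and n > 2d+2, and a partition of {1,...,n} into sets A and B with |A| ∈ {⌈n/2⌉, ⌊n/2⌋} and |B| = n − |A|. Define C ⊆ {0,1}^n as the complement of the union of all (n−d−1)-dimensional subcubes whose anchors are (d+1)-coordinate assignments that are constant: all zeros if the majority of the d+1 anchor coordinates lie in A, and all ones if the majority lie in B. Then the VC dimension of C is exactly d. -/
open Finset

/-- The union `𝒜` of all `(n-d-1)`-cubes with all-zero anchors of size `d+1`
whose majority of anchor coordinates lies in `A`. -/
def zeroAnchored (n d : ℕ) (A : Finset (Fin n)) : Finset (Fin n → Bool) :=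
  Finset.univ.filter fun v => ∃ T : Finset (Fin n), T.card = d + 1 ∧
    d + 1 < 2 * (T ∩ A).card ∧ ∀ i ∈ T, v i = false

/-- The union `ℬ` of all `(n-d-1)`-cubes with all-one anchors of size `d+1`
whose majority of anchor coordinates lies in `B`. -/
def oneAnchored (n d : ℕ) (B : Finset (Fin n)) : Finset (Fin n → Bool) :=
  Finset.univ.filter fun v => ∃ T : Finset (Fin n), T.card = d + 1 ∧
    d + 1 < 2 * (T ∩ B).card ∧ ∀ i ∈ T, v i = true

/-- The class `C` of the construction: the complement of the complete union of
constant-anchored `(n-d-1)`-cubes. -/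
def constructionClass (n d : ℕ) (A B : Finset (Fin n)) : Finset (Fin n → Bool) :=
  Finset.univ \ (zeroAnchored n d A ∪ oneAnchored n d B)

/-
A set `J` of `d + 1` coordinates cannot be shattered: since `d + 1` is odd, one of `A`, `Aᶜ`
holds a strict majority of `J`, so one of the two constant patterns on `J` is an anchor of a
removed subcube. Conversely a set with `d / 2` coordinates on each side is shattered: extend any
pattern by `true` on `A` and `false` on `Aᶜ`; then the zeros inside `A` and the ones outside `A`
all lie in the chosen set, too few to form a majority of any anchor.
-/

section VCDimension

variable {α : Type*}

theorem Shatters.mono {C : Finset (α → Bool)} {I J : Finset α} (hI : Shatters C I)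
    (hJI : J ⊆ I) : Shatters C J := fun f => by
  obtain ⟨c, hc, hcf⟩ := hI f
  exact ⟨c, hc, fun i hi => hcf i (hJI hi)⟩

variable [Fintype α] [DecidableEq α] {C : Finset (α → Bool)}

theorem le_vcDim_of_shatters {I : Finset α} (hI : Shatters C I) : I.card ≤ vcDim C := by
  classical
  unfold _root_.vcDim
  exact le_sup (mem_filter.mpr ⟨mem_univ I, hI⟩)

theorem vcDim_le_of_forall_not_shatters {k : ℕ}
    (h : ∀ J : Finset α, J.card = k + 1 → ¬ Shatters C J) : vcDim C ≤ k := by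
  classical
  unfold _root_.vcDim
  refine Finset.sup_le fun I hI => ?_
  by_contra! hk
  obtain ⟨J, hJI, hJ⟩ := exists_subset_card_eq (show k + 1 ≤ I.card from hk)
  exact h J hJ ((mem_filter.mp hI).2.mono hJI)

end VCDimension

section Construction

variable {n d : ℕ} {A : Finset (Fin n)}

theorem not_shatters_constructionClass (hd : Even d) {J : Finset (Fin n)} (hJ : J.card = d + 1) :
    ¬ Shatters (constructionClass n d A Aᶜ) J := by
  intro hJsh
  have hsplit : (J ∩ A).card + (J ∩ Aᶜ).card = d + 1 := by
    rw [← sdiff_eq_inter_compl, card_inter_add_card_sdiff, hJ]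
  obtain ⟨k, rfl⟩ := hd
  by_cases hmaj : k + k + 1 < 2 * (J ∩ A).card
  · obtain ⟨c, hc, hcJ⟩ := hJsh fun _ => false
    exact (mem_sdiff.mp hc).2 (mem_union_left _ (mem_filter.mpr ⟨mem_univ c, J, hJ, hmaj, hcJ⟩))
  · obtain ⟨c, hc, hcJ⟩ := hJsh fun _ => true
    exact (mem_sdiff.mp hc).2 (mem_union_right _
      (mem_filter.mpr ⟨mem_univ c, J, hJ, by omega, hcJ⟩))

theorem notMem_zeroAnchored {v : Fin n → Bool}
    (hv : 2 * (A.filter fun i => v i = false).card ≤ d) : v ∉ zeroAnchored n d A := by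
  intro hmem
  obtain ⟨-, T, -, hmaj, hT⟩ := mem_filter.mp hmem
  have hsub : T ∩ A ⊆ A.filter fun i => v i = false := fun i hi =>
    mem_filter.mpr ⟨(mem_inter.mp hi).2, hT i (mem_inter.mp hi).1⟩
  have := card_le_card hsub
  omega

theorem notMem_oneAnchored {B : Finset (Fin n)} {v : Fin n → Bool}
    (hv : 2 * (B.filter fun i => v i = true).card ≤ d) : v ∉ oneAnchored n d B := by
  intro hmem
  obtain ⟨-, T, -, hmaj, hT⟩ := mem_filter.mp hmem
  have hsub : T ∩ B ⊆ B.filter fun i => v i = true := fun i hi =>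
    mem_filter.mpr ⟨(mem_inter.mp hi).2, hT i (mem_inter.mp hi).1⟩
  have := card_le_card hsub
  omega

theorem shatters_constructionClass {IA IB : Finset (Fin n)} (hIA : IA ⊆ A) (hIB : IB ⊆ Aᶜ)
    (hIAcard : 2 * IA.card ≤ d) (hIBcard : 2 * IB.card ≤ d) :
    Shatters (constructionClass n d A Aᶜ) (IA ∪ IB) := by
  intro f
  let c : Fin n → Bool := fun i => if i ∈ IA ∪ IB then f i else decide (i ∈ A)
  have hc_out : ∀ i ∉ IA ∪ IB, c i = decide (i ∈ A) := fun i hi => if_neg hi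
  have hzeros : A.filter (fun i => c i = false) ⊆ IA := by
    intro i hi
    obtain ⟨hiA, hci⟩ := mem_filter.mp hi
    by_cases hI : i ∈ IA ∪ IB
    · exact (mem_union.mp hI).resolve_right fun hiB => mem_compl.mp (hIB hiB) hiA
    · rw [hc_out i hI, decide_eq_false_iff_not] at hci
      exact absurd hiA hci
  have hones : Aᶜ.filter (fun i => c i = true) ⊆ IB := by
    intro i hi
    obtain ⟨hiA, hci⟩ := mem_filter.mp hi
    by_cases hI : i ∈ IA ∪ IB
    · exact (mem_union.mp hI).resolve_left fun hiA' => mem_compl.mp hiA (hIA hiA')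
    · rw [hc_out i hI, decide_eq_true_eq] at hci
      exact absurd hci (mem_compl.mp hiA)
  refine ⟨c, mem_sdiff.mpr ⟨mem_univ c, ?_⟩, fun i hi => if_pos hi⟩
  rw [mem_union, not_or]
  exact ⟨notMem_zeroAnchored ((Nat.mul_le_mul_left 2 (card_le_card hzeros)).trans hIAcard),
    notMem_oneAnchored ((Nat.mul_le_mul_left 2 (card_le_card hones)).trans hIBcard)⟩

end Construction

/-- For even `d`, `n > 2d+2` and a near-equal partition `A`, `B` of the
coordinates, the class `C` of the construction has VC dimension exactly `d`. -/
theorem construction_vcDim (n d : ℕ) (hdeven : Even d) (hn : 2 * d + 2 < n)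
    (A B : Finset (Fin n)) (hB : B = Aᶜ)
    (hA : A.card = (n + 1) / 2 ∨ A.card = n / 2) :
    vcDim (constructionClass n d A B) = d := by
  subst hB
  refine le_antisymm (vcDim_le_of_forall_not_shatters fun J hJ =>
    not_shatters_constructionClass hdeven hJ) ?_
  obtain ⟨k, rfl⟩ := hdeven
  have hkA : k ≤ A.card := by omega
  have hkAc : k ≤ Aᶜ.card := by rw [card_compl, Fintype.card_fin]; omega
  obtain ⟨IA, hIA, hIAcard⟩ := exists_subset_card_eq hkA
  obtain ⟨IB, hIB, hIBcard⟩ := exists_subset_card_eq hkAc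
  calc k + k = (IA ∪ IB).card := by
        rw [card_union_of_disjoint (disjoint_compl_right.mono hIA hIB)]; omega
    _ ≤ _ := le_vcDim_of_shatters (shatters_constructionClass hIA hIB (by omega) (by omega))
end

section
/- With C as in the construction (complement of the complete union of constant-anchored (n−d−1)-cubes, anchors all-zero when the majority of anchor coordinates is in A and all-one when the majority is in B, d even, n > 2d+2), the intersection S = 𝒜 ∩ ℬ of the union 𝒜 of all-zero-anchored cubes with the union ℬ of all-one-anchored cubes contains no (n−2d−1)-dimensional subcube. -/
open Finset

/-- In the construction, the intersection `S = 𝒜 ∩ ℬ` of the all-zero-anchored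
and all-one-anchored unions contains no `(n-2d-1)`-dimensional subcube. -/
theorem construction_intersection_no_large_cube (n d : ℕ)
    (hdeven : Even d) (hn : 2 * d + 2 < n)
    (A B : Finset (Fin n)) (hB : B = Aᶜ)
    (hA : A.card = (n + 1) / 2 ∨ A.card = n / 2) :
    ∀ (F : Finset (Fin n)) (a : Fin n → Bool), F.card = n - (2 * d + 1) →
      ¬ (subcube F a ⊆ zeroAnchored n d A ∩ oneAnchored n d B) := by
  intro F a hF hsub
  have hFle : F.card ≤ n := by
    simpa using Finset.card_le_univ F
  have hFc : Fᶜ.card = 2 * d + 1 := by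
    have h := Finset.card_compl F
    simp only [Fintype.card_fin] at h
    omega
  classical
  set Z := Fᶜ.filter (fun i => a i = false) with hZdef
  set O := Fᶜ.filter (fun i => ¬ (a i = false)) with hOdef
  have hZO : Z.card + O.card = 2 * d + 1 := by
    rw [hZdef, hOdef, Finset.card_filter_add_card_filter_not, hFc]
  rcases le_or_gt Z.card d with hZ | hZ
  · set v : Fin n → Bool := fun i => if i ∈ F then true else a i with hvdef
    have hv : v ∈ subcube F a := by
      simp only [subcube, Finset.mem_filter, Finset.mem_univ, true_and]
      intro i hi
      simp [hvdef, hi]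
    obtain ⟨h1, -⟩ := Finset.mem_inter.mp (hsub hv)
    simp only [zeroAnchored, Finset.mem_filter, Finset.mem_univ, true_and] at h1
    obtain ⟨T, hTcard, hmaj, hTfalse⟩ := h1
    have hTsub : T ⊆ Z := by
      intro i hi
      have hfi := hTfalse i hi
      by_cases hiF : i ∈ F
      · simp [hvdef, hiF] at hfi
      · simp only [hvdef, hiF, if_false] at hfi
        simp [hZdef, Finset.mem_filter, Finset.mem_compl, hiF, hfi]
    have := Finset.card_le_card hTsub
    omega
  · have hO : O.card ≤ d := by omega
    set v : Fin n → Bool := fun i => if i ∈ F then false else a i with hvdef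
    have hv : v ∈ subcube F a := by
      simp only [subcube, Finset.mem_filter, Finset.mem_univ, true_and]
      intro i hi
      simp [hvdef, hi]
    obtain ⟨-, h2⟩ := Finset.mem_inter.mp (hsub hv)
    simp only [oneAnchored, Finset.mem_filter, Finset.mem_univ, true_and] at h2
    obtain ⟨T, hTcard, hmaj, hTtrue⟩ := h2
    have hTsub : T ⊆ O := by
      intro i hi
      have hfi := hTtrue i hi
      by_cases hiF : i ∈ F
      · simp [hvdef, hiF] at hfi
      · simp only [hvdef, hiF, if_false] at hfi
        simp [hOdef, Finset.mem_filter, Finset.mem_compl, hiF, hfi]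
    have := Finset.card_le_card hTsub
    omega
end

section
/- With C as in the construction (d even, n > 2d+2, near-equal partition A, B of coordinates), the class M* defined as the union of all (n−2d−1)-dimensional subcubes whose anchors consist of 2d+1 coordinates with value 0 on coordinates in A and value 1 on coordinates in B is a maximum class of VC dimension n−2d−1 contained in the complement of C. Consequently C embeds in a maximum class of VC dimension 2d. -/
open Finset

/-- The union of all `(n-2d-1)`-cubes whose anchors (of size `2d+1`) are `0` on
coordinates in `A` and `1` on coordinates in `B`. -/
def mStar (n d : ℕ) (B : Finset (Fin n)) : Finset (Fin n → Bool) :=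
  Finset.univ.filter fun v => ∃ T : Finset (Fin n), T.card = 2 * d + 1 ∧
    ∀ i ∈ T, v i = decide (i ∈ B)

/-!
`M*` is a Hamming ball: a vector lies in it iff it agrees with the indicator `b` of `B` on at
least `2d+1` coordinates, i.e. iff it is within distance `n-2d-1` of `b`. A Hamming ball of
radius `m` has `∑_{i ≤ m} (n choose i)` elements and shatters exactly the sets of size at most
`m`, so it is a maximum class of VC dimension `m`. Since `B = Aᶜ`, every anchor of size `2d+1`
has `d+1` coordinates in `A` or `d+1` in `B`, which puts `M*` inside the complement of `C`. The
complement of the ball of radius `n-2d-1` around `b` is the ball of radius `2d` around `!b`,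
and it contains `C`.
-/

section HammingBall

variable {α : Type*} [Fintype α]

lemma card_filter_card_le (m : ℕ) :
    #{S : Finset α | #S ≤ m} = ∑ i ∈ range (m + 1), (Fintype.card α).choose i := by
  rw [card_eq_sum_card_fiberwise (f := card) (t := range (m + 1))
    (fun S hS => by simpa [Nat.lt_succ_iff] using hS)]
  refine sum_congr rfl fun i hi => ?_
  rw [← card_univ, ← card_powersetCard]
  congr 1
  ext S
  simp only [mem_range] at hi
  simp only [mem_filter, mem_univ, true_and, mem_powersetCard_univ]
  exact ⟨And.right, fun hS => ⟨by omega, hS⟩⟩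

lemma hammingDist_not_add_hammingDist (v b : α → Bool) :
    hammingDist v (fun i => !b i) + hammingDist v b = Fintype.card α := by
  have hnot : hammingDist v (fun i => !b i) = #{i | ¬ v i ≠ b i} := by
    unfold hammingDist
    congr 1
    ext i
    cases v i <;> cases b i <;> simp
  rw [hnot, add_comm, hammingDist, card_filter_add_card_filter_not, card_univ]

lemma exists_agree_card_eq_iff {v b : α → Bool} {k : ℕ} (hk : k ≤ Fintype.card α) :
    (∃ T : Finset α, #T = k ∧ ∀ i ∈ T, v i = b i) ↔ hammingDist v b ≤ Fintype.card α - k := by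
  have hagree : #{i | v i = b i} + hammingDist v b = Fintype.card α := by
    rw [hammingDist, card_filter_add_card_filter_not, card_univ]
  constructor
  · rintro ⟨T, rfl, hT⟩
    have := card_le_card fun i hi => mem_filter.2 ⟨mem_univ i, hT i hi⟩
    omega
  · intro h
    obtain ⟨T, hT, rfl⟩ := exists_subset_card_eq (s := {i | v i = b i}) (n := k) (by omega)
    exact ⟨T, rfl, fun i hi => (mem_filter.1 (hT hi)).2⟩

variable [DecidableEq α]

def hammingBall (b : α → Bool) (m : ℕ) : Finset (α → Bool) :=
  {v | hammingDist v b ≤ m}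

@[simp]
lemma mem_hammingBall {b v : α → Bool} {m : ℕ} : v ∈ hammingBall b m ↔ hammingDist v b ≤ m := by
  simp [hammingBall]

lemma card_hammingBall (b : α → Bool) (m : ℕ) :
    #(hammingBall b m) = ∑ i ∈ range (m + 1), (Fintype.card α).choose i := by
  rw [← card_filter_card_le]
  set flipOn : Finset α → α → Bool := fun S i => if i ∈ S then !b i else b i
  have hflipOn (S : Finset α) : ({i | flipOn S i ≠ b i} : Finset α) = S := by
    ext i
    by_cases hi : i ∈ S <;> simp [flipOn, hi]
  refine card_nbij' (fun v => ({i | v i ≠ b i} : Finset α)) flipOn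
    (fun v hv => by simpa [hammingDist] using hv)
    (fun S hS => by simpa [hammingDist, hflipOn] using hS) (fun v _ => ?_) (fun S _ => hflipOn S)
  funext i
  simp only [flipOn, ne_eq, mem_filter, mem_univ, true_and]
  cases v i <;> cases b i <;> rfl

lemma shatters_hammingBall_iff {b : α → Bool} {m : ℕ} {I : Finset α} :
    Shatters (hammingBall b m) I ↔ #I ≤ m := by
  constructor
  · intro hI
    obtain ⟨c, hc, hcI⟩ := hI fun i => !b i
    have hsub : I ⊆ ({i | c i ≠ b i} : Finset α) := fun i hi => by simp [hcI i hi]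
    exact (card_le_card hsub).trans (mem_hammingBall.1 hc)
  · intro hI f
    refine ⟨fun i => if i ∈ I then f i else b i, ?_, fun i hi => by simp [hi]⟩
    refine mem_hammingBall.2 ((card_le_card fun i => ?_).trans hI)
    by_cases hi : i ∈ I <;> simp [hi]

lemma vcDim_hammingBall (b : α → Bool) {m : ℕ} (hm : m ≤ Fintype.card α) :
    vcDim (hammingBall b m) = m := by
  classical
  unfold _root_.vcDim
  refine le_antisymm (Finset.sup_le fun I hI => shatters_hammingBall_iff.1 (mem_filter.1 hI).2) ?_
  obtain ⟨I, -, rfl⟩ := exists_subset_card_eq (s := (univ : Finset α)) (by simpa using hm)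
  exact le_sup (mem_filter.2 ⟨mem_univ I, shatters_hammingBall_iff.2 le_rfl⟩)

lemma sdiff_hammingBall {b : α → Bool} {m : ℕ} (hm : m < Fintype.card α) :
    univ \ hammingBall b m = hammingBall (fun i => !b i) (Fintype.card α - (m + 1)) := by
  ext v
  have := hammingDist_not_add_hammingDist v b
  simp only [mem_sdiff, mem_univ, true_and, mem_hammingBall]
  omega

end HammingBall

lemma exists_anchor_subset_inter {α : Type*} [DecidableEq α] {T A : Finset α} {d : ℕ}
    (h : d + 1 ≤ #(T ∩ A)) : ∃ T' ⊆ T ∩ A, #T' = d + 1 ∧ d + 1 < 2 * #(T' ∩ A) := by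
  obtain ⟨T', hT', hcard⟩ := exists_subset_card_eq h
  refine ⟨T', hT', hcard, ?_⟩
  rw [inter_eq_left.2 (hT'.trans inter_subset_right), hcard]
  omega

lemma mStar_eq_hammingBall {n d : ℕ} (B : Finset (Fin n)) (hd : 2 * d + 1 ≤ n) :
    mStar n d B = hammingBall (fun i => decide (i ∈ B)) (n - (2 * d + 1)) := by
  ext v
  have := exists_agree_card_eq_iff (v := v) (b := fun i => decide (i ∈ B))
    (k := 2 * d + 1) (by simpa using hd)
  simp only [Fintype.card_fin] at this
  simp [mStar, this]

lemma mStar_subset_anchored {n d : ℕ} {A B : Finset (Fin n)} (hB : B = Aᶜ) :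
    mStar n d B ⊆ zeroAnchored n d A ∪ oneAnchored n d B := by
  subst hB
  intro v hv
  obtain ⟨T, hT, hTv⟩ := (mem_filter.1 hv).2
  have hsplit := card_inter_add_card_sdiff T A
  rw [sdiff_eq_inter_compl, hT] at hsplit
  rcases le_or_gt (d + 1) #(T ∩ A) with hA | hA
  · obtain ⟨T', hT', hcard, hmaj⟩ := exists_anchor_subset_inter hA
    refine mem_union_left _ (mem_filter.2 ⟨mem_univ v, T', hcard, hmaj, fun i hi => ?_⟩)
    have hi' := mem_inter.1 (hT' hi)
    simpa [hi'.2] using hTv i hi'.1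
  · obtain ⟨T', hT', hcard, hmaj⟩ := exists_anchor_subset_inter (T := T) (A := Aᶜ) (d := d)
      (by omega)
    refine mem_union_right _ (mem_filter.2 ⟨mem_univ v, T', hcard, hmaj, fun i hi => ?_⟩)
    have hi' := mem_inter.1 (hT' hi)
    simpa [hi'.2] using hTv i hi'.1

lemma constructionClass_subset_hammingBall {n d : ℕ} {A B : Finset (Fin n)} (hB : B = Aᶜ)
    (hd : 2 * d + 1 ≤ n) :
    constructionClass n d A B ⊆ hammingBall (fun i => !decide (i ∈ B)) (2 * d) := by
  have hC : constructionClass n d A B ⊆ univ \ mStar n d B :=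
    sdiff_subset_sdiff subset_rfl (mStar_subset_anchored hB)
  rw [mStar_eq_hammingBall B hd, sdiff_hammingBall (by simp; omega), Fintype.card_fin] at hC
  rwa [show n - (n - (2 * d + 1) + 1) = 2 * d by omega] at hC

theorem construction_embeds_in_2d_maximum_general (n d : ℕ)
    (hn : 2 * d + 2 < n)
    (A B : Finset (Fin n)) (hB : B = Aᶜ) :
    mStar n d B ⊆ zeroAnchored n d A ∪ oneAnchored n d B ∧
    (mStar n d B).card = ∑ i ∈ Finset.range (n - (2 * d + 1) + 1), n.choose i ∧
    vcDim (mStar n d B) = n - (2 * d + 1) ∧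
    ∃ Cs : Finset (Fin n → Bool), constructionClass n d A B ⊆ Cs ∧
      Cs.card = ∑ i ∈ Finset.range (2 * d + 1), n.choose i ∧
      vcDim Cs = 2 * d := by
  have hM := mStar_eq_hammingBall (d := d) B (by omega)
  refine ⟨mStar_subset_anchored hB, ?_, ?_, _, constructionClass_subset_hammingBall hB (by omega),
    ?_, ?_⟩
  · rw [hM, card_hammingBall, Fintype.card_fin]
  · rw [hM, vcDim_hammingBall _ (by simp)]
  · rw [card_hammingBall, Fintype.card_fin]
  · exact vcDim_hammingBall _ (by simp; omega)

/-- In the construction, `M*` is a maximum class of VC dimension `n-2d-1`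
contained in the complement of `C`; consequently `C` embeds in a maximum class
of VC dimension `2d`. -/
theorem construction_embeds_in_2d_maximum (n d : ℕ)
    (hdeven : Even d) (hn : 2 * d + 2 < n)
    (A B : Finset (Fin n)) (hB : B = Aᶜ)
    (hA : A.card = (n + 1) / 2 ∨ A.card = n / 2) :
    mStar n d B ⊆ zeroAnchored n d A ∪ oneAnchored n d B ∧
    (mStar n d B).card = ∑ i ∈ Finset.range (n - (2 * d + 1) + 1), n.choose i ∧
    vcDim (mStar n d B) = n - (2 * d + 1) ∧
    ∃ Cs : Finset (Fin n → Bool), constructionClass n d A B ⊆ Cs ∧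
      Cs.card = ∑ i ∈ Finset.range (2 * d + 1), n.choose i ∧
      vcDim Cs = 2 * d :=
  construction_embeds_in_2d_maximum_general n d hn A B hB
end

section
/- Let 𝒢 = {s_1, ..., s_{2^n}} be a generating set of Boolean functions: s_1 is a single full-degree monomial, and each s_i (i ≥ 2) is the XOR-sum of some s_j with j < i and one new full-degree monomial, all 2^n monomials being used exactly once. Then 𝒢 ∪ {0} (0 the zero function), viewed as a subset of {0,1}^{2^n} via evaluation on all inputs in {0,1}^n, is a maximum class of VC dimension 1 in the binary 2^n-cube. -/
open Finset

def Tnat (par : ℕ → ℕ) : ℕ → Finset ℕ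
  | 0 => {0}
  | (k+1) => insert (k+1) (Tnat par (min (par (k+1)) k))
decreasing_by exact Nat.lt_succ_of_le (min_le_right _ _)

lemma Tnat_le (par : ℕ → ℕ) : ∀ k, ∀ v ∈ Tnat par k, v ≤ k := by
  intro k
  induction k using Nat.strong_induction_on with
  | _ k ih =>
    match k with
    | 0 => intro v hv; simp [Tnat] at hv; omega
    | (k+1) =>
      intro v hv
      rw [Tnat, Finset.mem_insert] at hv
      rcases hv with rfl | hv
      · exact le_refl _
      · have := ih (min (par (k+1)) k) (Nat.lt_succ_of_le (min_le_right _ _)) v hv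
        omega

lemma Tnat_self (par : ℕ → ℕ) (k : ℕ) : k ∈ Tnat par k := by
  cases k <;> simp [Tnat]

lemma Tnat_path (par : ℕ → ℕ) : ∀ i a b, a ∈ Tnat par i → b ∈ Tnat par i → a < b →
    a ∈ Tnat par b := by
  intro i
  induction i using Nat.strong_induction_on with
  | _ i ih =>
    match i with
    | 0 =>
      intro a b ha hb hab
      simp [Tnat] at ha hb; omega
    | (k+1) =>
      intro a b ha hb hab
      rw [Tnat, Finset.mem_insert] at ha hb
      rcases hb with rfl | hb
      · rcases ha with rfl | ha
        · omega
        · rw [Tnat, Finset.mem_insert]; exact Or.inr ha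
      · have hbk : b ≤ min (par (k+1)) k := Tnat_le par _ b hb
        rcases ha with rfl | ha
        · omega
        · exact ih (min (par (k+1)) k) (Nat.lt_succ_of_le (min_le_right _ _)) a b ha hb hab

lemma Tnat_trans (par : ℕ → ℕ) : ∀ i a b, a ∈ Tnat par b → b ∈ Tnat par i →
    a ∈ Tnat par i := by
  intro i
  induction i using Nat.strong_induction_on with
  | _ i ih =>
    match i with
    | 0 =>
      intro a b ha hb
      simp [Tnat] at hb; subst hb; exact ha
    | (k+1) =>
      intro a b ha hb
      rw [Tnat, Finset.mem_insert] at hb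
      rcases hb with rfl | hb
      · exact ha
      · rw [Tnat, Finset.mem_insert]
        exact Or.inr (ih (min (par (k+1)) k) (Nat.lt_succ_of_le (min_le_right _ _)) a b ha hb)


/-- A generating set `s_1, …, s_{2^n}` of Boolean functions (here indexed from
`0`): `s 0` is a single full-degree monomial (the indicator of the point `p 0`),
and each subsequent `s i` is the XOR of some earlier `s j` with the new monomial
indicating `p i`, where `p` enumerates all `2^n` monomials bijectively.  Then
the generating set together with the zero function is a maximum class of VC
dimension 1 in the binary `2^n`-cube. -/
theorem generating_set_maximum_vc1 (n : ℕ)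
    (s : Fin (2 ^ n) → ((Fin n → Bool) → Bool))
    (p : Fin (2 ^ n) ≃ (Fin n → Bool))
    (hbase : s 0 = fun x => decide (x = p 0))
    (hstep : ∀ i : Fin (2 ^ n), 0 < (i : ℕ) → ∃ j : Fin (2 ^ n), (j : ℕ) < (i : ℕ) ∧
      s i = fun x => xor (s j x) (decide (x = p i))) :
    (insert (fun _ => false) (Finset.image s Finset.univ)).card = 2 ^ n + 1 ∧
    vcDim (insert (fun _ => false) (Finset.image s Finset.univ)) = 1 := by
  classical
  -- choose a parent function
  obtain ⟨q, hq⟩ : ∃ q : Fin (2^n) → Fin (2^n), ∀ i : Fin (2^n), 0 < (i:ℕ) →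
      ((q i : ℕ) < (i:ℕ) ∧ s i = fun x => xor (s (q i) x) (decide (x = p i))) := by
    refine ⟨fun i => if h : 0 < (i:ℕ) then Classical.choose (hstep i h) else i, ?_⟩
    intro i h
    simp only [dif_pos h]
    exact Classical.choose_spec (hstep i h)
  set par : ℕ → ℕ := fun k => if h : k < 2^n then (q ⟨k, h⟩ : ℕ) else 0 with hpar_def
  -- the key evaluation lemma
  have hkey : ∀ k, ∀ i : Fin (2^n), (i:ℕ) = k → ∀ x,
      s i x = decide ((p.symm x : ℕ) ∈ Tnat par k) := by
    intro k
    induction k using Nat.strong_induction_on with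
    | _ k ih =>
      match k with
      | 0 =>
        intro i hik x
        have hi0 : i = 0 := by
          apply Fin.ext
          simpa using hik
        subst hi0
        rw [hbase]
        simp only [Tnat, Finset.mem_singleton]
        have : (x = p 0) ↔ ((p.symm x : ℕ) = 0) := by
          rw [← Equiv.symm_apply_eq]
          constructor
          · intro h; rw [h]; simp
          · intro h; apply Fin.ext; simpa using h
        simp [this]
      | (k+1) =>
        intro i hik x
        have hpos : 0 < (i:ℕ) := by omega
        obtain ⟨hqlt, hqs⟩ := hq i hpos
        have hklt : k + 1 < 2^n := hik ▸ i.isLt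
        have hieq : (⟨k+1, hklt⟩ : Fin (2^n)) = i := Fin.ext (by simp [hik])
        have hpk : par (k+1) = (q i : ℕ) := by
          rw [hpar_def]
          simp only [dif_pos hklt, hieq]
        have hmin : min (par (k+1)) k = (q i : ℕ) := by
          rw [hpk]; omega
        have hT : Tnat par (k+1) = insert (k+1) (Tnat par (q i : ℕ)) := by
          rw [Tnat, hmin]
        rw [hqs]
        simp only []
        have hIH : s (q i) x = decide ((p.symm x : ℕ) ∈ Tnat par (q i : ℕ)) :=
          ih (q i : ℕ) (by omega) (q i) rfl x
        rw [hIH, hT]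
        have hxiff : (x = p i) ↔ ((p.symm x : ℕ) = k + 1) := by
          rw [← Equiv.symm_apply_eq]
          constructor
          · intro h; rw [h]; exact hik
          · intro h; apply Fin.ext; rw [h, hik]
        have hnotin : (k+1) ∉ Tnat par (q i : ℕ) := by
          intro hmem
          have := Tnat_le par _ _ hmem
          omega
        by_cases h1 : (p.symm x : ℕ) ∈ Tnat par (q i : ℕ) <;>
          by_cases h2 : (p.symm x : ℕ) = k + 1 <;>
          simp [h1, h2, hxiff, Finset.mem_insert, hnotin]
  have hself : ∀ i : Fin (2^n), s i (p i) = true := by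
    intro i
    rw [hkey (i:ℕ) i rfl]
    simp [Tnat_self]
  have hlt : ∀ i j : Fin (2^n), (j:ℕ) < (i:ℕ) → s j (p i) = false := by
    intro i j hji
    rw [hkey (j:ℕ) j rfl]
    simp only [Equiv.symm_apply_apply, decide_eq_false_iff_not]
    intro hmem
    have := Tnat_le par _ _ hmem
    omega
  have hinj : Function.Injective s := by
    intro i j h
    by_contra hne
    have hne' : (i:ℕ) ≠ (j:ℕ) := fun hc => hne (Fin.ext hc)
    rcases lt_or_gt_of_ne hne' with hc | hc
    · have h1 := hself j
      have h2 := hlt j i hc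
      rw [h] at h2
      rw [h1] at h2
      exact Bool.true_eq_false.mp h2
    · have h1 := hself i
      have h2 := hlt i j hc
      rw [← h] at h2
      rw [h1] at h2
      exact Bool.true_eq_false.mp h2
  set C := insert (fun _ => false) (Finset.image s Finset.univ) with hC
  have hzero_not : (fun _ => false) ∉ Finset.image s Finset.univ := by
    intro hmem
    obtain ⟨i, _, hi⟩ := Finset.mem_image.mp hmem
    have := hself i
    rw [hi] at this
    exact Bool.false_ne_true this
  constructor
  · rw [hC, Finset.card_insert_of_notMem hzero_not,
      Finset.card_image_of_injective _ hinj, Finset.card_univ, Fintype.card_fin]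
  · -- VC dimension
    have hmemC : ∀ c ∈ C, c = (fun _ => false) ∨ ∃ i, c = s i := by
      intro c hc
      rcases Finset.mem_insert.mp hc with h | h
      · exact Or.inl h
      · obtain ⟨i, _, hi⟩ := Finset.mem_image.mp h
        exact Or.inr ⟨i, hi.symm⟩
    have noPair : ∀ x y : Fin n → Bool, ((p.symm x : ℕ) < (p.symm y : ℕ)) →
        (∀ f : (Fin n → Bool) → Bool, ∃ c ∈ C, c x = f x ∧ c y = f y) → False := by
      intro x y hxy hpat
      have hxyne : x ≠ y := by
        intro h; rw [h] at hxy; omega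
      -- pattern (true, true)
      obtain ⟨c1, hc1, h1x, h1y⟩ := hpat (fun _ => true)
      rcases hmemC c1 hc1 with rfl | ⟨i, rfl⟩
      · exact Bool.false_ne_true h1x
      have hax : ((p.symm x : ℕ)) ∈ Tnat par (i:ℕ) := by
        have := hkey (i:ℕ) i rfl x
        rw [h1x] at this
        exact of_decide_eq_true this.symm
      have hbx : ((p.symm y : ℕ)) ∈ Tnat par (i:ℕ) := by
        have := hkey (i:ℕ) i rfl y
        rw [h1y] at this
        exact of_decide_eq_true this.symm
      have hab : ((p.symm x : ℕ)) ∈ Tnat par ((p.symm y : ℕ)) :=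
        Tnat_path par (i:ℕ) _ _ hax hbx hxy
      -- pattern (false, true)
      obtain ⟨c2, hc2, h2x, h2y0⟩ := hpat (fun z => decide (z = y))
      have h2y : c2 y = true := by simpa using h2y0
      rcases hmemC c2 hc2 with rfl | ⟨j, rfl⟩
      · exact Bool.false_ne_true h2y
      have h2x' : s j x = false := by
        rw [h2x, decide_eq_false hxyne]
      have hbj : ((p.symm y : ℕ)) ∈ Tnat par (j:ℕ) := by
        have := hkey (j:ℕ) j rfl y
        rw [h2y] at this
        exact of_decide_eq_true this.symm
      have haj : ((p.symm x : ℕ)) ∉ Tnat par (j:ℕ) := by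
        have := hkey (j:ℕ) j rfl x
        rw [h2x'] at this
        exact of_decide_eq_false this.symm
      exact haj (Tnat_trans par (j:ℕ) _ _ hab hbj)
    unfold _root_.vcDim
    apply le_antisymm
    · apply Finset.sup_le
      intro I hI
      have hSh : Shatters C I := (Finset.mem_filter.mp hI).2
      by_contra hcard
      obtain ⟨x, hx, y, hy, hne⟩ := Finset.one_lt_card.mp (by omega : 1 < I.card)
      have hpatgen : ∀ x' y', x' ∈ I → y' ∈ I →
          (∀ f : (Fin n → Bool) → Bool, ∃ c ∈ C, c x' = f x' ∧ c y' = f y') := by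
        intro x' y' hx' hy' f
        obtain ⟨c, hc, hag⟩ := hSh f
        exact ⟨c, hc, hag x' hx', hag y' hy'⟩
      have hne' : ((p.symm x : ℕ)) ≠ ((p.symm y : ℕ)) := by
        intro h
        exact hne (by
          have : p.symm x = p.symm y := Fin.ext h
          have := congrArg p this
          simpa using this)
      rcases lt_or_gt_of_ne hne' with hc | hc
      · exact noPair x y hc (hpatgen x y hx hy)
      · exact noPair y x hc (hpatgen y x hy hx)
    · -- sup ≥ 1
      have x0 := (fun _ => false : Fin n → Bool)
      have hsh : Shatters C {fun _ => false} := by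
        intro f
        by_cases hf : f (fun _ => false) = true
        · refine ⟨s (p.symm (fun _ => false)), ?_, ?_⟩
          · exact Finset.mem_insert_of_mem (Finset.mem_image.mpr ⟨_, Finset.mem_univ _, rfl⟩)
          · intro i hi
            rw [Finset.mem_singleton] at hi
            subst hi
            rw [hf]
            have := hself (p.symm (fun _ => false))
            rwa [Equiv.apply_symm_apply] at this
        · refine ⟨(fun _ => false), Finset.mem_insert_self _ _, ?_⟩
          intro i hi
          rw [Finset.mem_singleton] at hi
          subst hi
          simp at hf
          rw [hf]
      have hmem : ({fun _ => false} : Finset (Fin n → Bool)) ∈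
          Finset.univ.filter (Shatters C) := by
        rw [Finset.mem_filter]
        exact ⟨Finset.mem_univ _, hsh⟩
      calc 1 = ({fun _ => false} : Finset (Fin n → Bool)).card := (Finset.card_singleton _).symm
        _ ≤ _ := Finset.le_sup hmem
end
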